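/- arXiv:2109.02184 — 6 statements merged into one kernel-verified Lean document; each statement's English description precedes it below -/
import Mathlib

section
/- Let (M, dist) be a metric space, V a finite nonempty set of points (voters) in M, and a, b ∈ M two distinct points (candidates) with dist(a,b) > 0. Let h > 0, set r := dist(a,b)/h, and suppose at most γ·|V| of the voters lie in the open ball B(a, r), where γ ∈ [0,1). Then (∑_{i∈V} dist(i,b)) / (∑_{i∈V} dist(i,a)) ≤ 1 + h/(1−γ). -/
/-- Lemma of Skowron and Elkind: if at most a `γ` fraction of voters lie in the ball
`B(a, dist(a,b)/h)`, then the social-cost ratio of `b` to `a` is at most `1 + h/(1-γ)`. -/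
theorem wave_lemma {M : Type*} [MetricSpace M] {ι : Type*} [Fintype ι] [Nonempty ι]
    (voter : ι → M) (a b : M) (hab : 0 < dist a b)
    (h γ r : ℝ) (hh : 0 < h) (hr : r = dist a b / h)
    (hγ0 : 0 ≤ γ) (hγ1 : γ < 1)
    (hball : ((Finset.univ.filter fun i => dist (voter i) a < r).card : ℝ)
      ≤ γ * Fintype.card ι) :
    (∑ i, dist (voter i) b) / (∑ i, dist (voter i) a) ≤ 1 + h / (1 - γ) := by
  set n : ℝ := (Fintype.card ι : ℝ) with hn
  have hnpos : 0 < n := by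
    simp only [hn]
    exact_mod_cast Fintype.card_pos
  have hr0 : 0 < r := by rw [hr]; positivity
  have h1γ : 0 < 1 - γ := by linarith
  set S : Finset ι := Finset.univ.filter fun i => ¬ dist (voter i) a < r with hS
  have hcardS : (S.card : ℝ) ≥ (1 - γ) * n := by
    have := Finset.card_filter_add_card_filter_not
      (s := (Finset.univ : Finset ι)) (p := fun i => dist (voter i) a < r)
    have hc : (S.card : ℝ) = n - ((Finset.univ.filter fun i => dist (voter i) a < r).card : ℝ) := by
      have h' : ((Finset.univ.filter fun i => dist (voter i) a < r).card : ℝ)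
          + ((Finset.univ.filter fun i => ¬ dist (voter i) a < r).card : ℝ)
          = ((Finset.univ : Finset ι).card : ℝ) := by exact_mod_cast this
      rw [hS]
      simp only [hn, ← Finset.card_univ]
      linarith
    rw [hc]; nlinarith
  have hSCa : (1 - γ) * n * r ≤ ∑ i, dist (voter i) a := by
    calc (1 - γ) * n * r ≤ (S.card : ℝ) * r := by nlinarith
    _ ≤ ∑ i ∈ S, dist (voter i) a := by
        have : ∑ _i ∈ S, r ≤ ∑ i ∈ S, dist (voter i) a := by
          apply Finset.sum_le_sum
          intro i hi
          simp only [hS, Finset.mem_filter] at hi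
          linarith [hi.2]
        simpa using this
    _ ≤ ∑ i, dist (voter i) a := by
        apply Finset.sum_le_sum_of_subset_of_nonneg (Finset.filter_subset _ _)
        intro i _ _; exact dist_nonneg
  have hSCapos : 0 < ∑ i, dist (voter i) a := lt_of_lt_of_le (by positivity) hSCa
  rw [div_le_iff₀ hSCapos]
  have hSCb : ∑ i, dist (voter i) b ≤ (∑ i, dist (voter i) a) + n * dist a b := by
    have : ∑ i, dist (voter i) b ≤ ∑ i, (dist (voter i) a + dist a b) :=
      Finset.sum_le_sum fun i _ => dist_triangle _ _ _
    rw [Finset.sum_add_distrib, Finset.sum_const] at this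
    simpa [hn, mul_comm, Finset.card_univ] using this
  have hrab : h * r = dist a b := by rw [hr]; field_simp
  have key : n * dist a b ≤ h / (1 - γ) * ∑ i, dist (voter i) a := by
    have h2 : h / (1 - γ) * ((1 - γ) * n * r) = n * dist a b := by
      rw [← hrab]; field_simp
    calc n * dist a b = h / (1 - γ) * ((1 - γ) * n * r) := h2.symm
    _ ≤ h / (1 - γ) * ∑ i, dist (voter i) a := by
        apply mul_le_mul_of_nonneg_left hSCa; positivity
  nlinarith
end

section
/- Let dist be an ultra-metric on a set M (i.e., dist(x,z) ≤ max(dist(x,y), dist(y,z)) for all x,y,z, with symmetry and dist(x,y)=0 iff x=y). Let V be a finite set of voters in M, C a finite set of candidates, and for each voter i let top(i) ∈ C denote a candidate satisfying dist(i, top(i)) ≤ dist(i, c) for all c ∈ C. Suppose a ∈ C and there is a bijection (perfect matching) Mch : V → V such that dist(i, a) ≤ dist(i, top(Mch(i))) for all i ∈ V. Then for every b ∈ C, ∑_{i∈V} dist(i, a) ≤ 2·∑_{i∈V} dist(i, b). -/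
/-- PluralityMatching has distortion at most 2 under ultra-metrics. -/
theorem pluralityMatching_ultrametric {M : Type*} {ι : Type*} [Fintype ι]
    (d : M → M → ℝ)
    (hzero : ∀ x y, d x y = 0 ↔ x = y)
    (hsymm : ∀ x y, d x y = d y x)
    (hultra : ∀ x y z, d x z ≤ max (d x y) (d y z))
    (voter : ι → M) (C : Finset M) (top : ι → M)
    (htopC : ∀ i, top i ∈ C)
    (htop : ∀ i, ∀ c ∈ C, d (voter i) (top i) ≤ d (voter i) c)
    (a : M) (ha : a ∈ C) (Mch : ι ≃ ι)
    (hmatch : ∀ i, d (voter i) a ≤ d (voter i) (top (Mch i))) :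
    ∀ b ∈ C, (∑ i, d (voter i) a) ≤ 2 * ∑ i, d (voter i) b := by
  intro b hb
  have hnn : ∀ x y, 0 ≤ d x y := by
    intro x y
    have h0 : d x x = 0 := (hzero x x).mpr rfl
    have := hultra x y x
    rw [h0, hsymm y x] at this
    simpa using this
  have key : ∀ i, d (voter i) a ≤ d (voter i) b + d (voter (Mch i)) b := by
    intro i
    have h1 : d (voter i) a ≤ d (voter i) (top (Mch i)) := hmatch i
    have h2 : d (voter i) (top (Mch i)) ≤
        max (d (voter i) (voter (Mch i))) (d (voter (Mch i)) (top (Mch i))) :=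
      hultra _ _ _
    have h3 : d (voter (Mch i)) (top (Mch i)) ≤ d (voter (Mch i)) b :=
      htop (Mch i) b hb
    have h4 : d (voter i) (voter (Mch i)) ≤
        max (d (voter i) b) (d b (voter (Mch i))) := hultra _ _ _
    have h5 : d b (voter (Mch i)) = d (voter (Mch i)) b := hsymm _ _
    have hib := hnn (voter i) b
    have hjb := hnn (voter (Mch i)) b
    calc d (voter i) a ≤ _ := h1.trans h2
    _ ≤ d (voter i) b + d (voter (Mch i)) b := by
        rw [h5] at h4
        apply max_le
        · exact h4.trans (max_le (by linarith) (by linarith))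
        · linarith
  calc (∑ i, d (voter i) a) ≤ ∑ i, (d (voter i) b + d (voter (Mch i)) b) :=
        Finset.sum_le_sum fun i _ => key i
  _ = (∑ i, d (voter i) b) + ∑ i, d (voter (Mch i)) b := Finset.sum_add_distrib
  _ = (∑ i, d (voter i) b) + ∑ i, d (voter i) b :=
        by rw [Equiv.sum_comp Mch (fun i => d (voter i) b)]
  _ = 2 * ∑ i, d (voter i) b := by ring
end

section
/- Let ρ ≥ 1, let dist be a ρ-approximate metric on M, V a finite set of voters, C a finite set of candidates, and top(i) ∈ C the closest candidate to voter i (dist(i, top(i)) ≤ dist(i, c) for all c ∈ C). If a ∈ C admits a bijection Mch : V → V with dist(i, a) ≤ dist(i, top(Mch(i))) for all i ∈ V, then for every b ∈ C, ∑_{i∈V} dist(i, a) ≤ (2ρ² + ρ)·∑_{i∈V} dist(i, b). -/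
/-- PluralityMatching has distortion at most `2ρ² + ρ` under `ρ`-approximate metrics. -/
theorem pluralityMatching_approx_metric {M : Type*} {ι : Type*} [Fintype ι]
    (ρ : ℝ) (hρ : 1 ≤ ρ) (d : M → M → ℝ)
    (hzero : ∀ x y, d x y = 0 ↔ x = y)
    (hsymm : ∀ x y, d x y = d y x)
    (htri : ∀ x y z, d x z ≤ ρ * (d x y + d y z))
    (voter : ι → M) (C : Finset M) (top : ι → M)
    (htopC : ∀ i, top i ∈ C)
    (htop : ∀ i, ∀ c ∈ C, d (voter i) (top i) ≤ d (voter i) c)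
    (a : M) (ha : a ∈ C) (Mch : ι ≃ ι)
    (hmatch : ∀ i, d (voter i) a ≤ d (voter i) (top (Mch i))) :
    ∀ b ∈ C, (∑ i, d (voter i) a) ≤ (2 * ρ ^ 2 + ρ) * ∑ i, d (voter i) b := by
  intro b hb
  have hρ0 : (0:ℝ) < ρ := lt_of_lt_of_le one_pos hρ
  -- b to top j bound
  have hbt : ∀ j, d b (top j) ≤ 2 * ρ * d (voter j) b := by
    intro j
    have h1 := htri b (voter j) (top j)
    have h2 := htop j b hb
    have := hsymm b (voter j)
    nlinarith
  have step1 : ∀ i, d (voter i) a ≤ ρ * (d (voter i) b + d b (top (Mch i))) := by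
    intro i
    exact (hmatch i).trans (htri (voter i) b (top (Mch i)))
  calc (∑ i, d (voter i) a)
      ≤ ∑ i, ρ * (d (voter i) b + d b (top (Mch i))) :=
        Finset.sum_le_sum fun i _ => step1 i
    _ = ρ * (∑ i, d (voter i) b) + ρ * (∑ i, d b (top (Mch i))) := by
        simp [mul_add, Finset.sum_add_distrib, Finset.mul_sum]
    _ = ρ * (∑ i, d (voter i) b) + ρ * (∑ j, d b (top j)) := by
        rw [Equiv.sum_comp Mch (fun j => d b (top j))]
    _ ≤ ρ * (∑ i, d (voter i) b) + ρ * (∑ j, 2 * ρ * d (voter j) b) := by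
        have := hρ0.le
        gcongr with j
        exact hbt j
    _ = (2 * ρ ^ 2 + ρ) * ∑ i, d (voter i) b := by
        rw [← Finset.mul_sum]; ring
end

section
/- Let ⊕ : ℝ × ℝ → ℝ be commutative, associative, and monotone in each argument. Let dist be a metric with respect to ⊕ on M (dist(x,z) ≤ dist(x,y) ⊕ dist(y,z)), V a finite nonempty set of voters, C a finite set of candidates, top(i) the closest candidate to voter i. If a ∈ C admits a bijection Mch : V → V with dist(i,a) ≤ dist(i, top(Mch(i))) for all i ∈ V, then for every b ∈ C, ⨁_{i∈V} dist(i,a) ≤ SC(b) ⊕ SC(b) ⊕ SC(b), where SC(b) = ⨁_{i∈V} dist(i,b). -/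
/-- The fold `f 0 ⊕ f 1 ⊕ ⋯ ⊕ f n` of a binary operator over a nonempty family. -/
def bigOp (op : ℝ → ℝ → ℝ) (n : ℕ) (f : Fin (n + 1) → ℝ) : ℝ :=
  (List.ofFn fun i : Fin n => f i.succ).foldl op (f 0)

section Aux

variable (op : ℝ → ℝ → ℝ)

lemma aux_foldl_mono (hcomm : ∀ x y, op x y = op y x)
    (hmono : ∀ x x' y, x ≤ x' → op x y ≤ op x' y) :
    ∀ {l l' : List ℝ}, List.Forall₂ (· ≤ ·) l l' → ∀ {x x' : ℝ}, x ≤ x' →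
      l.foldl op x ≤ l'.foldl op x' := by
  intro l l' h
  induction h with
  | nil => intro x x' hx; simpa
  | @cons a b l l' hab _ ih =>
    intro x x' hx
    simp only [List.foldl_cons]
    refine ih (le_trans (hmono _ _ _ hx) ?_)
    rw [hcomm x' a, hcomm x' b]
    exact hmono _ _ _ hab

lemma aux_ofFn_forall2 : ∀ {m : ℕ} {f g : Fin m → ℝ}, (∀ i, f i ≤ g i) →
    List.Forall₂ (· ≤ ·) (List.ofFn f) (List.ofFn g) := by
  intro m
  induction m with
  | zero => intro f g h; simp
  | succ m ih =>
    intro f g h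
    rw [List.ofFn_succ, List.ofFn_succ]
    exact List.Forall₂.cons (h 0) (ih fun i => h i.succ)

lemma aux_bigOp_mono (hcomm : ∀ x y, op x y = op y x)
    (hmono : ∀ x x' y, x ≤ x' → op x y ≤ op x' y)
    {n : ℕ} {f g : Fin (n + 1) → ℝ} (h : ∀ i, f i ≤ g i) :
    bigOp op n f ≤ bigOp op n g :=
  aux_foldl_mono op hcomm hmono (aux_ofFn_forall2 fun i => h i.succ) (h 0)

lemma aux_foldl_split (hcomm : ∀ x y, op x y = op y x)
    (hassoc : ∀ x y z, op (op x y) z = op x (op y z)) :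
    ∀ (l m : List ℝ), l.length = m.length → ∀ x y : ℝ,
      (List.zipWith op l m).foldl op (op x y) = op (l.foldl op x) (m.foldl op y) := by
  intro l
  induction l with
  | nil =>
    intro m hm x y
    have : m = [] := List.eq_nil_of_length_eq_zero hm.symm
    subst this; simp
  | cons a l ih =>
    intro m hm x y
    cases m with
    | nil => simp at hm
    | cons b m =>
      simp only [List.zipWith_cons_cons, List.foldl_cons]
      rw [← ih m (by simpa using hm) (op x a) (op y b)]
      congr 1
      rw [hassoc, hassoc]
      congr 1
      rw [← hassoc, ← hassoc, hcomm y a]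

lemma aux_ofFn_zipWith {m : ℕ} (f g : Fin m → ℝ) :
    List.ofFn (fun i => op (f i) (g i)) = List.zipWith op (List.ofFn f) (List.ofFn g) := by
  induction m with
  | zero => simp
  | succ m ih => simp [List.ofFn_succ, ih]

lemma aux_bigOp_split (hcomm : ∀ x y, op x y = op y x)
    (hassoc : ∀ x y z, op (op x y) z = op x (op y z))
    {n : ℕ} (f g : Fin (n + 1) → ℝ) :
    bigOp op n (fun i => op (f i) (g i)) = op (bigOp op n f) (bigOp op n g) := by
  unfold bigOp
  rw [aux_ofFn_zipWith]
  exact aux_foldl_split op hcomm hassoc _ _ (by simp) _ _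

lemma aux_fold1 [Std.Commutative op] [Std.Associative op] :
    ∀ (s s' : Multiset ℝ) (a a' : ℝ), a ::ₘ s = a' ::ₘ s' →
      s.fold op a = s'.fold op a' := by
  have hcomm : ∀ x y, op x y = op y x := Std.Commutative.comm
  intro s s' a a' h
  rcases Multiset.cons_eq_cons.1 h with ⟨rfl, rfl⟩ | ⟨_, cs, rfl, rfl⟩
  · rfl
  · rw [Multiset.fold_cons'_left, Multiset.fold_cons'_left, hcomm]

lemma aux_bigOp_eq_fold [Std.Commutative op] [Std.Associative op] {n : ℕ} (f : Fin (n + 1) → ℝ) :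
    bigOp op n f = Multiset.fold op (f 0)
      (Multiset.map (fun i : Fin n => f i.succ) ↑(List.finRange n)) := by
  rw [bigOp, List.ofFn_eq_map]
  simp only [Multiset.map_coe, Multiset.coe_fold_l]

lemma aux_bigOp_perm (hcomm : ∀ x y, op x y = op y x)
    (hassoc : ∀ x y z, op (op x y) z = op x (op y z))
    {n : ℕ} (f : Fin (n + 1) → ℝ) (σ : Fin (n + 1) ≃ Fin (n + 1)) :
    bigOp op n (fun i => f (σ i)) = bigOp op n f := by
  haveI : Std.Commutative op := ⟨hcomm⟩
  haveI : Std.Associative op := ⟨hassoc⟩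
  rw [aux_bigOp_eq_fold, aux_bigOp_eq_fold]
  apply aux_fold1 op
  have key : ∀ g : Fin (n + 1) → ℝ,
      (g 0) ::ₘ Multiset.map (fun i : Fin n => g i.succ) ↑(List.finRange n) =
        Multiset.map g (Finset.univ : Finset (Fin (n + 1))).val := by
    intro g
    rw [Fin.univ_def]
    show _ = Multiset.map g ↑(List.finRange (n + 1))
    rw [List.finRange_succ]
    simp only [Multiset.map_coe, Multiset.cons_coe, List.map_map, Multiset.coe_eq_coe]
    simp [Function.comp_def]
  rw [key (fun i => f (σ i)), key f]
  have : Multiset.map (fun i => f (σ i)) (Finset.univ : Finset (Fin (n + 1))).val =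
      Multiset.map f (Multiset.map σ (Finset.univ : Finset (Fin (n + 1))).val) := by
    rw [Multiset.map_map]; rfl
  rw [this, Multiset.map_univ_val_equiv]

end Aux

/-- Axiomatic PluralityMatching guarantee: for any commutative, associative, monotone
operator `⊕` and any metric w.r.t. `⊕`, the matched candidate `a` satisfies
`SC(a) ≤ SC(b) ⊕ SC(b) ⊕ SC(b)` for every candidate `b`. -/
theorem pluralityMatching_axiomatic {M : Type*} (op : ℝ → ℝ → ℝ)
    (hcomm : ∀ x y, op x y = op y x)
    (hassoc : ∀ x y z, op (op x y) z = op x (op y z))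
    (hmono : ∀ x x' y, x ≤ x' → op x y ≤ op x' y)
    (d : M → M → ℝ)
    (hzero : ∀ x y, d x y = 0 ↔ x = y)
    (hsymm : ∀ x y, d x y = d y x)
    (htri : ∀ x y z, d x z ≤ op (d x y) (d y z))
    (n : ℕ) (voter : Fin (n + 1) → M) (C : Finset M) (top : Fin (n + 1) → M)
    (htopC : ∀ i, top i ∈ C)
    (htop : ∀ i, ∀ c ∈ C, d (voter i) (top i) ≤ d (voter i) c)
    (a : M) (ha : a ∈ C) (Mch : Fin (n + 1) ≃ Fin (n + 1))
    (hmatch : ∀ i, d (voter i) a ≤ d (voter i) (top (Mch i))) :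
    ∀ b ∈ C, bigOp op n (fun i => d (voter i) a) ≤
      op (bigOp op n fun i => d (voter i) b)
        (op (bigOp op n fun i => d (voter i) b) (bigOp op n fun i => d (voter i) b)) := by
  intro b hb
  have hmono2 : ∀ x y y' : ℝ, y ≤ y' → op x y ≤ op x y' := by
    intro x y y' h
    rw [hcomm x y, hcomm x y']
    exact hmono _ _ _ h
  -- pointwise bound
  have hpt : ∀ i, d (voter i) a ≤
      op (d (voter i) b) (op (d (voter (Mch i)) b) (d (voter (Mch i)) b)) := by
    intro i
    refine le_trans (hmatch i) (le_trans (htri (voter i) b (top (Mch i))) ?_)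
    apply hmono2
    refine le_trans (htri b (voter (Mch i)) (top (Mch i))) ?_
    rw [hsymm b (voter (Mch i))]
    exact hmono2 _ _ _ (htop (Mch i) b hb)
  refine le_trans (aux_bigOp_mono op hcomm hmono hpt) ?_
  rw [aux_bigOp_split op hcomm hassoc
      (fun i => d (voter i) b)
      (fun i => op (d (voter (Mch i)) b) (d (voter (Mch i)) b))]
  apply hmono2
  have := aux_bigOp_perm op hcomm hassoc
      (fun i => op (d (voter i) b) (d (voter i) b)) Mch
  rw [this, aux_bigOp_split op hcomm hassoc (fun i => d (voter i) b) (fun i => d (voter i) b)]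
end

section
/- With the same hypotheses as the axiomatic PluralityMatching theorem, if the operator ⊕ is additionally idempotent (x ⊕ x = x for all x), then the matched candidate a satisfies SC(a) ≤ SC(b) for every candidate b, i.e., PluralityMatching has distortion 1. In particular, this holds for ⊕ = max with dist an ultra-metric and SC(c) = max_{i∈V} dist(i,c). -/
section Aux

variable (op : ℝ → ℝ → ℝ) [Std.Commutative op] [Std.Associative op]

lemma bigOp_eq_fold (n : ℕ) (f : Fin (n + 1) → ℝ) (hidem : ∀ x, op x x = x) :
    bigOp op n f = Multiset.fold op (f 0) (Multiset.map f (Finset.univ.val)) := by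
  rw [Fin.univ_val_map, List.ofFn_succ]
  show bigOp op n f = Multiset.fold op (f 0) (f 0 ::ₘ ↑(List.ofFn fun i : Fin n => f i.succ))
  rw [Multiset.fold_cons'_left, hidem, bigOp, Multiset.coe_fold_l]

lemma fold_map_mono (hmono : ∀ x x' y, x ≤ x' → op x y ≤ op x' y)
    {β : Type*} (f g : β → ℝ) (hfg : ∀ i, f i ≤ g i) :
    ∀ (s : Multiset β) (x y : ℝ), x ≤ y →
      Multiset.fold op x (s.map f) ≤ Multiset.fold op y (s.map g) := by
  have hmono2 : ∀ x x' y y' : ℝ, x ≤ x' → y ≤ y' → op x y ≤ op x' y' := by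
    intro x x' y y' h1 h2
    calc op x y ≤ op x' y := hmono _ _ _ h1
    _ = op y x' := Std.Commutative.comm x' y
    _ ≤ op y' x' := hmono _ _ _ h2
    _ = op x' y' := Std.Commutative.comm y' x'
  intro s
  induction s using Multiset.induction_on with
  | empty => intro x y h; simpa using h
  | cons a s ih =>
    intro x y h
    simp only [Multiset.map_cons, Multiset.fold_cons_left]
    exact hmono2 _ _ _ _ (hfg a) (ih _ _ h)

lemma fold_init_swap (hidem : ∀ x, op x x = x) (s : Multiset ℝ) (x y : ℝ)
    (hx : x ∈ s) (hy : y ∈ s) : Multiset.fold op x s = Multiset.fold op y s := by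
  rcases eq_or_ne x y with rfl | hne
  · rfl
  · have hy' : y ∈ s.erase x := Multiset.mem_erase_of_ne (Ne.symm hne) |>.mpr hy
    have h1 : s = x ::ₘ y ::ₘ (s.erase x).erase y := by
      rw [Multiset.cons_erase hy', Multiset.cons_erase hx]
    rw [h1, Multiset.fold_cons'_left, Multiset.fold_cons'_left,
      Multiset.fold_cons'_left, Multiset.fold_cons'_left]
    congr 1
    calc op y (op x x) = op y x := by rw [hidem]
    _ = op y (op y x) := by rw [← Std.Associative.assoc (op := op), hidem]
    _ = op y (op x y) := by rw [Std.Commutative.comm (op := op) x y]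

end Aux

/-- If `⊕` is additionally idempotent, the matched candidate has distortion 1:
`SC(a) ≤ SC(b)` for every candidate `b`. -/
theorem pluralityMatching_idempotent {M : Type*} (op : ℝ → ℝ → ℝ)
    (hcomm : ∀ x y, op x y = op y x)
    (hassoc : ∀ x y z, op (op x y) z = op x (op y z))
    (hmono : ∀ x x' y, x ≤ x' → op x y ≤ op x' y)
    (hidem : ∀ x, op x x = x)
    (d : M → M → ℝ)
    (hzero : ∀ x y, d x y = 0 ↔ x = y)
    (hsymm : ∀ x y, d x y = d y x)
    (htri : ∀ x y z, d x z ≤ op (d x y) (d y z))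
    (n : ℕ) (voter : Fin (n + 1) → M) (C : Finset M) (top : Fin (n + 1) → M)
    (htopC : ∀ i, top i ∈ C)
    (htop : ∀ i, ∀ c ∈ C, d (voter i) (top i) ≤ d (voter i) c)
    (a : M) (ha : a ∈ C) (Mch : Fin (n + 1) ≃ Fin (n + 1))
    (hmatch : ∀ i, d (voter i) a ≤ d (voter i) (top (Mch i))) :
    ∀ b ∈ C, bigOp op n (fun i => d (voter i) a) ≤ bigOp op n (fun i => d (voter i) b) := by
  haveI : Std.Commutative op := ⟨hcomm⟩
  haveI : Std.Associative op := ⟨hassoc⟩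
  intro b hb
  set f : Fin (n + 1) → ℝ := fun i => d (voter i) a with hf
  set g : Fin (n + 1) → ℝ := fun i => d (voter i) b with hg
  set h : Fin (n + 1) → ℝ := fun i => op (g i) (g (Mch i)) with hh
  have hmono2 : ∀ x y y' : ℝ, y ≤ y' → op x y ≤ op x y' := by
    intro x y y' hyy
    calc op x y = op y x := hcomm x y
    _ ≤ op y' x := hmono _ _ _ hyy
    _ = op x y' := hcomm y' x
  -- pointwise bound f i ≤ h i
  have key : ∀ i, f i ≤ h i := by
    intro i
    have h1 : d (voter i) a ≤ d (voter i) (top (Mch i)) := hmatch i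
    have h2 : d (voter i) (top (Mch i)) ≤
        op (d (voter i) b) (d b (top (Mch i))) := htri _ _ _
    have h3 : d b (top (Mch i)) ≤
        op (d b (voter (Mch i))) (d (voter (Mch i)) (top (Mch i))) := htri _ _ _
    have h4 : d (voter (Mch i)) (top (Mch i)) ≤ d (voter (Mch i)) b :=
      htop _ _ hb
    have h5 : d b (voter (Mch i)) = d (voter (Mch i)) b := hsymm _ _
    have h6 : d b (top (Mch i)) ≤ g (Mch i) := by
      calc d b (top (Mch i)) ≤ op (d b (voter (Mch i))) (d (voter (Mch i)) (top (Mch i))) := h3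
      _ ≤ op (d b (voter (Mch i))) (d (voter (Mch i)) b) := hmono2 _ _ _ h4
      _ = op (d (voter (Mch i)) b) (d (voter (Mch i)) b) := by rw [h5]
      _ = g (Mch i) := hidem _
    calc f i ≤ d (voter i) (top (Mch i)) := h1
    _ ≤ op (d (voter i) b) (d b (top (Mch i))) := h2
    _ ≤ op (g i) (g (Mch i)) := hmono2 _ _ _ h6
  -- rewrite bigOps as multiset folds
  rw [bigOp_eq_fold op n f hidem, bigOp_eq_fold op n g hidem]
  have step1 : Multiset.fold op (f 0) (Multiset.map f Finset.univ.val) ≤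
      Multiset.fold op (h 0) (Multiset.map h Finset.univ.val) :=
    fold_map_mono op hmono f h key _ _ _ (key 0)
  refine le_trans step1 (le_of_eq ?_)
  -- fold of h equals fold of g
  have hmapσ : Multiset.map (g ∘ Mch) Finset.univ.val = Multiset.map g Finset.univ.val := by
    rw [← Multiset.map_map, Multiset.map_univ_val_equiv]
  have hmem : ∀ j : Fin (n + 1), g j ∈ Multiset.map g Finset.univ.val := fun j =>
    Multiset.mem_map_of_mem g (Finset.mem_univ_val j)
  calc Multiset.fold op (h 0) (Multiset.map h Finset.univ.val)
      = Multiset.fold op (op (g 0) ((g ∘ Mch) 0))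
        (Multiset.map (fun i => op (g i) ((g ∘ Mch) i)) Finset.univ.val) := rfl
  _ = op (Multiset.fold op (g 0) (Multiset.map g Finset.univ.val))
        (Multiset.fold op ((g ∘ Mch) 0) (Multiset.map (g ∘ Mch) Finset.univ.val)) :=
      Multiset.fold_distrib op _ _ _
  _ = op (Multiset.fold op (g 0) (Multiset.map g Finset.univ.val))
        (Multiset.fold op (g 0) (Multiset.map g Finset.univ.val)) := by
      rw [hmapσ]
      congr 1
      exact fold_init_swap op hidem _ ((g ∘ Mch) 0) (g 0) (hmem (Mch 0)) (hmem 0)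
  _ = Multiset.fold op (g 0) (Multiset.map g Finset.univ.val) := hidem _
end

section
/- Let (M, dist) be a metric space, V a finite set of voters, C a finite set of candidates, and suppose candidate a ∈ C has distortion at least 𝔇 > 1, i.e., ∑_{i∈V} dist(i,a) ≥ 𝔇 · ∑_{i∈V} dist(i,x) for some candidate x ∈ C with positive social cost. Then the set W = {i ∈ V : dist(i,x) < dist(i,a)} of voters strictly preferring x to a satisfies |W| ≥ (1 − 2/(𝔇+1)) · |V|. -/
/-- Candidates with distortion at least `𝔇` are opposed by a coalition of at least a
`1 − 2/(𝔇+1)` fraction of the voters. -/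
theorem large_coalition {M : Type*} [MetricSpace M] {ι : Type*} [Fintype ι]
    (voter : ι → M) (C : Finset M) (a x : M) (ha : a ∈ C) (hx : x ∈ C)
    (D : ℝ) (hD : 1 < D)
    (hSCx : 0 < ∑ i, dist (voter i) x)
    (hdistort : D * ∑ i, dist (voter i) x ≤ ∑ i, dist (voter i) a) :
    (1 - 2 / (D + 1)) * (Fintype.card ι : ℝ) ≤
      ((Finset.univ.filter fun i => dist (voter i) x < dist (voter i) a).card : ℝ) := by
  classical
  set d : ℝ := dist a x with hd
  set W : Finset ι := Finset.univ.filter fun i => dist (voter i) x < dist (voter i) a with hW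
  set Wc : Finset ι := Finset.univ.filter fun i => ¬ dist (voter i) x < dist (voter i) a
    with hWc
  have hsplit : ∀ f : ι → ℝ, ∑ i ∈ W, f i + ∑ i ∈ Wc, f i = ∑ i, f i := fun f =>
    Finset.sum_filter_add_sum_filter_not Finset.univ _ f
  have hcard : (W.card : ℝ) + (Wc.card : ℝ) = (Fintype.card ι : ℝ) := by
    have := Finset.card_filter_add_card_filter_not
      (s := Finset.univ) (p := fun i => dist (voter i) x < dist (voter i) a)
    rw [Finset.card_univ] at this
    exact_mod_cast this
  -- d > 0
  have hdpos : 0 < d := by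
    rcases eq_or_lt_of_le (dist_nonneg : (0:ℝ) ≤ d) with h | h
    · exfalso
      have hax : a = x := by
        have : dist a x = 0 := h.symm
        exact dist_eq_zero.mp this
      rw [hax] at hdistort
      nlinarith
    · exact h
  -- SC(a) ≤ SC(x) + |W| * d
  have h1 : ∑ i, dist (voter i) a ≤ ∑ i, dist (voter i) x + (W.card : ℝ) * d := by
    rw [← hsplit (fun i => dist (voter i) a), ← hsplit (fun i => dist (voter i) x)]
    have hA : ∑ i ∈ W, dist (voter i) a ≤ ∑ i ∈ W, (dist (voter i) x + d) := by
      refine Finset.sum_le_sum fun i _ => ?_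
      calc dist (voter i) a ≤ dist (voter i) x + dist x a := dist_triangle _ _ _
        _ = dist (voter i) x + d := by rw [dist_comm x a]
    have hB : ∑ i ∈ Wc, dist (voter i) a ≤ ∑ i ∈ Wc, dist (voter i) x := by
      refine Finset.sum_le_sum fun i hi => ?_
      have := (Finset.mem_filter.mp hi).2
      linarith [not_lt.mp this]
    rw [Finset.sum_add_distrib, Finset.sum_const, nsmul_eq_mul] at hA
    linarith
  -- SC(x) ≥ (n - |W|) * d / 2
  have h2 : (Wc.card : ℝ) * (d / 2) ≤ ∑ i, dist (voter i) x := by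
    have hB : ∀ i ∈ Wc, d / 2 ≤ dist (voter i) x := by
      intro i hi
      have hle : dist (voter i) a ≤ dist (voter i) x :=
        not_lt.mp (Finset.mem_filter.mp hi).2
      have htri : d ≤ dist a (voter i) + dist (voter i) x := dist_triangle a (voter i) x
      rw [dist_comm a (voter i)] at htri
      linarith
    calc (Wc.card : ℝ) * (d / 2) = ∑ _i ∈ Wc, d / 2 := by
          rw [Finset.sum_const, nsmul_eq_mul]
      _ ≤ ∑ i ∈ Wc, dist (voter i) x := Finset.sum_le_sum hB
      _ ≤ ∑ i, dist (voter i) x := by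
          rw [← hsplit (fun i => dist (voter i) x)]
          have : 0 ≤ ∑ i ∈ W, dist (voter i) x :=
            Finset.sum_nonneg fun i _ => dist_nonneg
          linarith
  -- combine
  have hDp : 0 < D + 1 := by linarith
  have key : (D - 1) * (Wc.card : ℝ) ≤ 2 * (W.card : ℝ) := by
    nlinarith [h1, h2, hdistort, hSCx, hdpos,
      mul_le_mul_of_nonneg_left h2 (by linarith : (0:ℝ) ≤ D - 1)]
  have heq : (1 - 2 / (D + 1)) = (D - 1) / (D + 1) := by
    field_simp
    ring
  rw [heq, div_mul_eq_mul_div, div_le_iff₀ hDp]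
  nlinarith [key, hcard]
end
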